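/- Let g¹,...,g^D, f¹,...,f^D : ℝ → ℝ, and suppose for each i there exist μ^{i,g}, σ^{i,g}, μ^{i,f}, σ^{i,f} : ℝ → ℝ with σ's nonnegative and constants β^{i,g}, β^{i,f} ≥ 0 such that |g^i(x) - μ^{i,g}(x)| ≤ β^{i,g} σ^{i,g}(x) and |f^i(x) - μ^{i,f}(x)| ≤ β^{i,f} σ^{i,f}(x) for all x. Let x_* satisfy ∑_i f^i(x_*^i) ≤ L, and let x_t minimize ∑_i (μ^{i,g}(x^i) - β^{i,g} σ^{i,g}(x^i)) over all x with ∑_i (μ^{i,f}(x^i) - β^{i,f} σ^{i,f}(x^i)) ≤ L. Then the instantaneous regret satisfies ∑_i (g^i(x_t^i) - g^i(x_*^i)) ≤ 2 ∑_i β^{i,g} σ^{i,g}(x_t^i). -/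
import Mathlib


open Finset

/-- Per-round regret bound for the optimistic constrained BO step. -/
theorem instantaneous_regret_bound
    (D : ℕ) (hD : 1 ≤ D) (L : ℝ)
    (g f μg σg μf σf : Fin D → ℝ → ℝ) (βg βf : Fin D → ℝ)
    (hσg : ∀ i x, 0 ≤ σg i x) (hσf : ∀ i x, 0 ≤ σf i x)
    (hβg : ∀ i, 0 ≤ βg i) (hβf : ∀ i, 0 ≤ βf i)
    (hconcg : ∀ i x, |g i x - μg i x| ≤ βg i * σg i x)
    (hconcf : ∀ i x, |f i x - μf i x| ≤ βf i * σf i x)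
    (xs xt : Fin D → ℝ)
    (hfeas_star : ∑ i, f i (xs i) ≤ L)
    (hfeas_t : ∑ i, (μf i (xt i) - βf i * σf i (xt i)) ≤ L)
    (hmin : ∀ x : Fin D → ℝ,
      ∑ i, (μf i (x i) - βf i * σf i (x i)) ≤ L →
        ∑ i, (μg i (xt i) - βg i * σg i (xt i)) ≤ ∑ i, (μg i (x i) - βg i * σg i (x i))) :
    ∑ i, (g i (xt i) - g i (xs i)) ≤ 2 * ∑ i, βg i * σg i (xt i) := by
  have hfs : ∑ i, (μf i (xs i) - βf i * σf i (xs i)) ≤ L := by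
    refine le_trans (Finset.sum_le_sum fun i _ => ?_) hfeas_star
    have := abs_le.mp (hconcf i (xs i))
    linarith [this.1]
  have hlcb := hmin xs hfs
  have h1 : ∑ i, g i (xt i) ≤ ∑ i, (μg i (xt i) - βg i * σg i (xt i)) + 2 * ∑ i, βg i * σg i (xt i) := by
    rw [Finset.mul_sum, ← Finset.sum_add_distrib]
    refine Finset.sum_le_sum fun i _ => ?_
    have := abs_le.mp (hconcg i (xt i))
    linarith [this.2]
  have h2 : ∑ i, (μg i (xs i) - βg i * σg i (xs i)) ≤ ∑ i, g i (xs i) := by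
    refine Finset.sum_le_sum fun i _ => ?_
    have := abs_le.mp (hconcg i (xs i))
    linarith [this.1]
  have : ∑ i, (g i (xt i) - g i (xs i)) = ∑ i, g i (xt i) - ∑ i, g i (xs i) := by
    rw [Finset.sum_sub_distrib]
  linarith
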